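/- Let N = 2n+1 be odd and D the equispaced trigonometric differentiation matrix. The all-ones vector spans the kernel of D; that is, D v = 0 implies v is a constant multiple of (1,1,…,1). -/

import Mathlib

/-!
`Dmat (2n+1)` is circulant, so the discrete Fourier transform diagonalises it and a vector in its
kernel can only have Fourier coefficients at frequencies where the symbol's transform vanishes.
That transform is `i · cotSum (n + 1 - k)`, and `cotSum` telescopes: it drops by `1` at every step
`a ↦ a + 1` except at `a = 0`, where it jumps by `N - 1`, and pairing `d` with `-d` gives
`cotSum 0 = -n`. Hence the eigenvalue at frequency `k` is `i k` for the representative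
`-n ≤ k ≤ n`, which vanishes only at `k = 0`, and `v` must be constant.
-/

open Real

/-- The equispaced trigonometric differentiation matrix, as a complex matrix. -/
noncomputable def Dmat (N : ℕ) : Matrix (Fin N) (Fin N) ℂ := fun j k =>
  if j = k then 0
  else (-1 : ℂ) ^ (j.1 + k.1) / (2 * (Real.sin (π * ((j.1 : ℝ) - (k.1 : ℝ)) / N) : ℂ))

open Complex ZMod Finset Matrix

namespace ZMod

variable {N : ℕ} [NeZero N]

theorem dft_circulant_mulVec (f v : ZMod N → ℂ) (k : ZMod N) :
    𝓕 (circulant f *ᵥ v) k = 𝓕 f k * 𝓕 v k := by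
  simp only [dft_apply, mulVec, dotProduct, circulant_apply, smul_eq_mul, Finset.mul_sum,
    Finset.sum_mul]
  rw [Finset.sum_comm]
  refine Finset.sum_congr rfl fun m _ => ?_
  rw [← Equiv.sum_comp (Equiv.addRight m)]
  refine Finset.sum_congr rfl fun d _ => ?_
  simp only [Equiv.coe_addRight, add_sub_cancel_right, add_mul, neg_add, AddChar.map_add_eq_mul]
  ring

theorem exists_eq_const_of_dft_eq_zero {v : ZMod N → ℂ} (hv : ∀ k ≠ 0, 𝓕 v k = 0) :
    ∃ c, v = fun _ ↦ c := by
  refine ⟨(N : ℂ)⁻¹ * 𝓕 v 0, funext fun j => ?_⟩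
  rw [← dft.symm_apply_apply v, invDFT_apply,
    Finset.sum_eq_single 0 (fun k _ hk => by rw [hv k hk, smul_zero]) (by simp)]
  simp

theorem exists_eq_const_of_circulant_mulVec_eq_zero {f v : ZMod N → ℂ}
    (hf : ∀ k ≠ 0, 𝓕 f k ≠ 0) (hv : circulant f *ᵥ v = 0) : ∃ c, v = fun _ ↦ c :=
  exists_eq_const_of_dft_eq_zero fun k hk =>
    (mul_eq_zero.mp (by rw [← dft_circulant_mulVec, hv, map_zero, Pi.zero_apply])).resolve_left
      (hf k hk)

lemma stdAddChar_eq_one_iff {d : ZMod N} : stdAddChar d = 1 ↔ d = 0 := by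
  rw [← AddChar.map_zero_eq_one (stdAddChar (N := N)), injective_stdAddChar.eq_iff]

lemma stdAddChar_ne_zero (d : ZMod N) : stdAddChar d ≠ 0 := Circle.coe_ne_zero _

/-- With `stdAddChar d = e^{iθ}`, `1 / (e^{iθ} - 1) = -(1 + i cot (θ / 2)) / 2`, so this is a
twisted cotangent sum. The term `d = 0` vanishes by the convention `x / 0 = 0`. -/
noncomputable def cotSum (a : ZMod N) : ℂ :=
  ∑ d, stdAddChar (d * a) / (stdAddChar d - 1)

theorem cotSum_add_one (a : ZMod N) :
    cotSum (a + 1) = cotSum a + (if a = 0 then N else 0) - 1 := by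
  have hterm (d : ZMod N) : stdAddChar (d * (a + 1)) / (stdAddChar d - 1) =
      stdAddChar (d * a) / (stdAddChar d - 1) + (stdAddChar (d * a) - if d = 0 then 1 else 0) := by
    rw [mul_add_one, AddChar.map_add_eq_mul]
    split_ifs with hd
    · simp [hd]
    · have : stdAddChar d - 1 ≠ 0 := sub_ne_zero.mpr (stdAddChar_eq_one_iff.not.mpr hd)
      field_simp
      ring
  simp only [cotSum, hterm, Finset.sum_add_distrib, Finset.sum_sub_distrib, Finset.sum_ite_eq',
    Finset.mem_univ, if_true, AddChar.sum_mulShift a (isPrimitive_stdAddChar N), ZMod.card]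
  ring

theorem two_mul_cotSum_zero : 2 * cotSum (0 : ZMod N) = 1 - N := by
  have hterm (d : ZMod N) : 1 / (stdAddChar d - 1) + 1 / (stdAddChar (-d) - 1) =
      (if d = 0 then 1 else 0) - 1 := by
    split_ifs with hd
    · simp [hd]
    · have h1 : stdAddChar d ≠ 1 := stdAddChar_eq_one_iff.not.mpr hd
      have := sub_ne_zero.mpr h1
      have := sub_ne_zero.mpr h1.symm
      have := stdAddChar_ne_zero d
      rw [AddChar.map_neg_eq_inv]
      field_simp
      ring
  have hsum : cotSum (0 : ZMod N) = ∑ d : ZMod N, 1 / (stdAddChar d - 1) := by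
    simp only [cotSum, mul_zero, AddChar.map_zero_eq_one]
  calc 2 * cotSum (0 : ZMod N)
      = ∑ d : ZMod N, (1 / (stdAddChar d - 1) + 1 / (stdAddChar (-d) - 1)) := by
        rw [two_mul, Finset.sum_add_distrib, hsum]
        congr 1
        exact (Equiv.sum_comp (Equiv.neg _) (fun d => 1 / (stdAddChar d - 1))).symm
    _ = 1 - N := by
        simp only [hterm, Finset.sum_sub_distrib, Finset.sum_ite_eq', Finset.mem_univ, if_true,
          Finset.sum_const, Finset.card_univ, ZMod.card]
        simp

theorem cotSum_natCast_add_one {r : ℕ} (hr : r < N) :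
    cotSum ((r : ZMod N) + 1) = (N - 1) / 2 - r := by
  induction r with
  | zero =>
    rw [Nat.cast_zero, zero_add, ← zero_add 1, cotSum_add_one, if_pos rfl]
    linear_combination (1 / 2 : ℂ) * two_mul_cotSum_zero (N := N)
  | succ r ih =>
    have hr0 : ((r + 1 : ℕ) : ZMod N) ≠ 0 := by
      rw [Ne, ZMod.natCast_eq_zero_iff]
      exact Nat.not_dvd_of_pos_of_lt r.succ_pos hr
    rw [cotSum_add_one, if_neg hr0, Nat.cast_succ, ih (by omega)]
    push_cast
    ring

theorem cotSum_eq (a : ZMod N) : cotSum a = (N - 1) / 2 - (a - 1).val := by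
  rw [← cotSum_natCast_add_one (ZMod.val_lt (a - 1)), ZMod.natCast_zmod_val, sub_add_cancel]

end ZMod

lemma Complex.exp_mul_I_pow_div_two_sin (x : ℂ) (n : ℕ) :
    exp (x * I) ^ (2 * n + 1) / (2 * Complex.sin x) =
      I * exp (2 * x * I) ^ (n + 1) / (exp (2 * x * I) - 1) := by
  set w := exp (x * I)
  have hw : w ≠ 0 := exp_ne_zero _
  have hsin : 2 * Complex.sin x = (w⁻¹ - w) * I := by
    rw [Complex.sin, ← Complex.exp_neg, ← neg_mul]; ring
  have hsq : exp (2 * x * I) = w ^ 2 := by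
    rw [← Complex.exp_nat_mul]; ring_nf
  rw [hsin, hsq, ← mul_div_mul_right _ _ (mul_ne_zero hw I_ne_zero)]
  congr 1
  · ring
  · field_simp
    linear_combination (1 - w ^ 2) * I_sq

section Dmat

variable (n : ℕ)

/-- The sign `(-1)^(j+k)` makes `Dmat` circulant because `N` is odd; the value at `d = 0` is `0`
by the convention `x / 0 = 0`, matching the zero diagonal. -/
noncomputable def dmatSymbol (d : ZMod (2 * n + 1)) : ℂ :=
  I * stdAddChar d ^ (n + 1) / (stdAddChar d - 1)

-- `ZMod (2 * n + 1)` is by definition `Fin (2 * n + 1)`, so it can index `Dmat (2 * n + 1)`.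
theorem Dmat_apply (j k : ZMod (2 * n + 1)) : Dmat (2 * n + 1) j k = dmatSymbol n (j - k) := by
  unfold Dmat
  split_ifs with hjk
  · simp [hjk, dmatSymbol]
  set d : ℤ := (j.val : ℤ) - k.val
  have hd : j - k = (d : ZMod (2 * n + 1)) := by
    simp only [d, Int.cast_sub, Int.cast_natCast, ZMod.natCast_zmod_val]
  set x : ℂ := π * d / (2 * n + 1)
  have hsign : (-1 : ℂ) ^ (j.val + k.val) = exp (x * I) ^ (2 * n + 1) := by
    have hpow : ((2 * n + 1 : ℕ) : ℂ) * (x * I) = d * (π * I) := by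
      have : (2 * n + 1 : ℂ) ≠ 0 := by norm_cast
      simp only [x]
      push_cast
      field_simp
    rw [← Complex.exp_nat_mul, hpow, Complex.exp_int_mul, exp_pi_mul_I, ← zpow_natCast,
      neg_one_zpow_eq_ite, neg_one_zpow_eq_ite]
    simp [d, Int.even_add, Int.even_sub]
  have hsin : ((Real.sin (π * ((j.val : ℝ) - k.val) / (2 * n + 1 : ℕ)) : ℝ) : ℂ) =
      Complex.sin x := by
    simp only [ofReal_sin, x, d]; push_cast; ring_nf
  have hchar : stdAddChar (d : ZMod (2 * n + 1)) = exp (2 * x * I) := by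
    rw [stdAddChar_coe]; congr 1; simp only [x]; push_cast; ring
  rw [hd, dmatSymbol, hchar, ← exp_mul_I_pow_div_two_sin, ← hsign, ← hsin]
  rfl

theorem Dmat_eq_circulant : Dmat (2 * n + 1) = circulant (dmatSymbol n) := by
  ext j k
  exact Dmat_apply n j k

theorem dft_dmatSymbol (k : ZMod (2 * n + 1)) :
    𝓕 (dmatSymbol n) k = I * cotSum ((n + 1 : ZMod (2 * n + 1)) - k) := by
  rw [dft_apply, cotSum, Finset.mul_sum]
  refine Finset.sum_congr rfl fun d _ => ?_
  have hchar : stdAddChar (-(d * k)) * stdAddChar ((n + 1) • d) =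
      stdAddChar (d * ((n + 1 : ZMod (2 * n + 1)) - k)) := by
    rw [← AddChar.map_add_eq_mul, nsmul_eq_mul]
    push_cast
    ring_nf
  rw [dmatSymbol, ← AddChar.map_nsmul_eq_pow, smul_eq_mul, ← hchar]
  ring

theorem dft_dmatSymbol_ne_zero {k : ZMod (2 * n + 1)} (hk : k ≠ 0) :
    𝓕 (dmatSymbol n) k ≠ 0 := by
  have hval : ((n : ZMod (2 * n + 1)) - k).val ≠ n := by
    intro h
    have := ZMod.val_injective _ (h.trans (ZMod.val_natCast_of_lt (by omega : n < 2 * n + 1)).symm)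
    exact hk (by simpa using this)
  have hhalf : (((2 * n + 1 : ℕ) : ℂ) - 1) / 2 = n := by push_cast; ring
  rw [dft_dmatSymbol, cotSum_eq, hhalf, add_sub_right_comm, add_sub_cancel_right]
  exact mul_ne_zero I_ne_zero (sub_ne_zero.mpr (mod_cast hval.symm))

end Dmat

theorem Dmat_kernel (n : ℕ) (v : Fin (2 * n + 1) → ℂ)
    (hv : (Dmat (2 * n + 1)).mulVec v = 0) :
    ∃ c : ℂ, v = fun _ => c := by
  rw [Dmat_eq_circulant] at hv
  exact exists_eq_const_of_circulant_mulVec_eq_zero (fun _ hk => dft_dmatSymbol_ne_zero n hk) hv
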